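/- (Enflo's theorem on the Hamming cube.) Let n ≥ 1 and let H_n = {0,1}^n be equipped with the Hamming metric d_1. Then: (i) for every real Hilbert space H, every injective map f : H_n → H, and all constants A, B > 0 with A·d_1(x,y) ≤ ‖f(x) − f(y)‖_H ≤ B·d_1(x,y) for all x, y ∈ H_n, one has B/A ≥ √n; and (ii) there exists a map f : H_n → ℝ^n (with the Euclidean norm) and constants A, B > 0 with B/A = √n such that A·d_1(x,y) ≤ ‖f(x) − f(y)‖ ≤ B·d_1(x,y) for all x, y ∈ H_n. Hence the Euclidean distortion of (H_n, d_1) equals √n. -/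

import Mathlib

/-!
Enflo's inequality: for every map `f` from the cube into a real inner product space, the sum
of `‖f x - f x̄‖²` over all points `x` (with antipode `x̄`) is at most the sum of `‖f x - f y‖²`
over all ordered edges `(x, y)`. It follows by induction on `n` from the short diagonals
inequality applied to the quadrilaterals `f (0, x), f (1, x), f (1, x̄), f (0, x̄)`. For a map with
`A · d₁ ≤ ‖f x - f y‖ ≤ B · d₁` the left side is at least `2ⁿ (A n)²` and the right side at most
`2ⁿ n B²`, whence `A √n ≤ B`. The inclusion `{0,1}ⁿ ⊆ ℝⁿ` has `‖f x - f y‖ = √d₁`, which lies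
between `d₁ / √n` and `d₁`.
-/

open Finset

section Cube

variable {n : ℕ}

def cubeAntipode (x : Fin n → Bool) : Fin n → Bool := fun i => !x i

def cubeFlip (x : Fin n → Bool) (i : Fin n) : Fin n → Bool := Function.update x i (!x i)

lemma cubeAntipode_involutive : Function.Involutive (cubeAntipode (n := n)) := by
  intro x; funext i; simp [cubeAntipode]

lemma hammingDist_cubeAntipode (x : Fin n → Bool) : hammingDist x (cubeAntipode x) = n := by
  simp [hammingDist, cubeAntipode]

lemma hammingDist_cubeFlip (x : Fin n → Bool) (i : Fin n) : hammingDist x (cubeFlip x i) = 1 := by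
  rw [hammingDist, card_eq_one]
  refine ⟨i, ?_⟩
  ext j
  simp only [mem_filter_univ, mem_singleton]
  rcases eq_or_ne j i with rfl | hji
  · simp [cubeFlip]
  · simp [cubeFlip, hji]

lemma cubeAntipode_cons (c : Bool) (x : Fin n → Bool) :
    cubeAntipode (Fin.cons c x : Fin (n + 1) → Bool) = Fin.cons (!c) (cubeAntipode x) := by
  funext i
  refine Fin.cases ?_ (fun j => ?_) i <;> simp [cubeAntipode]

lemma cubeFlip_cons_zero (c : Bool) (x : Fin n → Bool) :
    cubeFlip (Fin.cons c x : Fin (n + 1) → Bool) 0 = Fin.cons (!c) x := by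
  rw [cubeFlip, Fin.cons_zero, Fin.update_cons_zero]

lemma cubeFlip_cons_succ (c : Bool) (x : Fin n → Bool) (j : Fin n) :
    cubeFlip (Fin.cons c x : Fin (n + 1) → Bool) j.succ = Fin.cons c (cubeFlip x j) := by
  rw [cubeFlip, Fin.cons_succ, ← Fin.cons_update, cubeFlip]

lemma sum_cube_succ {M : Type*} [AddCommMonoid M] (F : (Fin (n + 1) → Bool) → M) :
    ∑ x, F x = ∑ x, (F (Fin.cons false x) + F (Fin.cons true x)) := by
  rw [← (Fin.consEquiv fun _ => Bool).sum_comp F, Fintype.sum_prod_type, Fintype.sum_bool,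
    ← sum_add_distrib]
  exact sum_congr rfl fun x _ => add_comm _ _

end Cube

section Energy

variable {E : Type*} [SeminormedAddCommGroup E] {n : ℕ}

/-- The short diagonals lemma: the difference of the two sides is `‖a - b + c - d‖ ^ 2`. -/
theorem norm_sub_sq_add_norm_sub_sq_le [InnerProductSpace ℝ E] (a b c d : E) :
    ‖a - c‖ ^ 2 + ‖b - d‖ ^ 2 ≤ ‖a - b‖ ^ 2 + ‖b - c‖ ^ 2 + ‖c - d‖ ^ 2 + ‖a - d‖ ^ 2 := by
  have hac : a - c = (a - b) + (b - c) := by abel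
  have hbd : b - d = (b - c) + (c - d) := by abel
  have had : a - d = (a - b) + (b - c) + (c - d) := by abel
  have hdiff : 0 ≤ ‖(a - b) + (c - d)‖ ^ 2 := sq_nonneg _
  rw [hac, hbd, had]
  generalize a - b = u, b - c = v, c - d = w at hdiff ⊢
  simp only [norm_add_sq_real, inner_add_left] at hdiff ⊢
  linarith

def diagonalEnergy (f : (Fin n → Bool) → E) : ℝ := ∑ x, ‖f x - f (cubeAntipode x)‖ ^ 2

def edgeEnergy (f : (Fin n → Bool) → E) : ℝ := ∑ x, ∑ i, ‖f x - f (cubeFlip x i)‖ ^ 2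

lemma diagonalEnergy_succ (f : (Fin (n + 1) → Bool) → E) :
    diagonalEnergy f = ∑ x, (‖f (Fin.cons false x) - f (Fin.cons true (cubeAntipode x))‖ ^ 2 +
      ‖f (Fin.cons true x) - f (Fin.cons false (cubeAntipode x))‖ ^ 2) := by
  simp only [diagonalEnergy, sum_cube_succ, cubeAntipode_cons, Bool.not_false, Bool.not_true]

lemma edgeEnergy_succ (f : (Fin (n + 1) → Bool) → E) :
    edgeEnergy f = 2 * ∑ x, ‖f (Fin.cons false x) - f (Fin.cons true x)‖ ^ 2 +
      edgeEnergy (fun x => f (Fin.cons false x)) + edgeEnergy (fun x => f (Fin.cons true x)) := by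
  rw [edgeEnergy, sum_cube_succ]
  simp only [Fin.sum_univ_succ, cubeFlip_cons_zero, cubeFlip_cons_succ, Bool.not_false,
    Bool.not_true, sum_add_distrib, edgeEnergy]
  simp only [norm_sub_rev (f (Fin.cons true _)) (f (Fin.cons false _))]
  ring

theorem diagonalEnergy_le_edgeEnergy [InnerProductSpace ℝ E] (f : (Fin n → Bool) → E) :
    diagonalEnergy f ≤ edgeEnergy f := by
  induction n with
  | zero =>
    have hx : ∀ x : Fin 0 → Bool, cubeAntipode x = x := fun x => funext fun i => i.elim0
    simp [diagonalEnergy, edgeEnergy, hx]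
  | succ n ih =>
    set a : (Fin n → Bool) → E := fun x => f (Fin.cons false x)
    set b : (Fin n → Bool) → E := fun x => f (Fin.cons true x)
    have hreindex : ∑ x, ‖b (cubeAntipode x) - a (cubeAntipode x)‖ ^ 2 =
        ∑ x, ‖a x - b x‖ ^ 2 := by
      rw [cubeAntipode_involutive.bijective.sum_comp (fun x => ‖b x - a x‖ ^ 2)]
      simp_rw [norm_sub_rev (b _)]
    calc diagonalEnergy f
        = ∑ x, (‖a x - b (cubeAntipode x)‖ ^ 2 + ‖b x - a (cubeAntipode x)‖ ^ 2) :=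
          diagonalEnergy_succ f
      _ ≤ ∑ x, (‖a x - b x‖ ^ 2 + ‖b x - b (cubeAntipode x)‖ ^ 2 +
            ‖b (cubeAntipode x) - a (cubeAntipode x)‖ ^ 2 + ‖a x - a (cubeAntipode x)‖ ^ 2) :=
          sum_le_sum fun x _ => norm_sub_sq_add_norm_sub_sq_le _ _ _ _
      _ = 2 * ∑ x, ‖a x - b x‖ ^ 2 + diagonalEnergy a + diagonalEnergy b := by
          simp only [sum_add_distrib, hreindex, diagonalEnergy]
          ring
      _ ≤ 2 * ∑ x, ‖a x - b x‖ ^ 2 + edgeEnergy a + edgeEnergy b := by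
          gcongr <;> exact ih _
      _ = edgeEnergy f := (edgeEnergy_succ f).symm

theorem mul_sqrt_le_of_hammingDist_bounds [InnerProductSpace ℝ E] {f : (Fin n → Bool) → E}
    {A B : ℝ} (hA : 0 ≤ A) (hB : 0 ≤ B)
    (hlower : ∀ x y, A * hammingDist x y ≤ ‖f x - f y‖)
    (hupper : ∀ x y, ‖f x - f y‖ ≤ B * hammingDist x y) :
    A * √n ≤ B := by
  have hdiag : 2 ^ n * (A * n) ^ 2 ≤ diagonalEnergy f := by
    calc 2 ^ n * (A * n) ^ 2 = ∑ _x : Fin n → Bool, (A * n) ^ 2 := by simp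
      _ ≤ diagonalEnergy f := sum_le_sum fun x _ => by
        have h := hlower x (cubeAntipode x)
        rw [hammingDist_cubeAntipode] at h
        exact pow_le_pow_left₀ (by positivity) h 2
  have hedge : edgeEnergy f ≤ 2 ^ n * (n * B ^ 2) := by
    calc edgeEnergy f ≤ ∑ _x : Fin n → Bool, ∑ _i : Fin n, B ^ 2 :=
          sum_le_sum fun x _ => sum_le_sum fun i _ => by
            have h := hupper x (cubeFlip x i)
            rw [hammingDist_cubeFlip, Nat.cast_one, mul_one] at h
            exact pow_le_pow_left₀ (norm_nonneg _) h 2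
      _ = 2 ^ n * (n * B ^ 2) := by simp
  have hsq : n * (A ^ 2 * n) ≤ n * B ^ 2 := by
    have := le_of_mul_le_mul_left (hdiag.trans ((diagonalEnergy_le_edgeEnergy f).trans hedge))
      (by positivity)
    linarith
  rcases n.eq_zero_or_pos with rfl | hn
  · simpa using hB
  have hsq' : (A * √n) ^ 2 ≤ B ^ 2 := by
    rw [mul_pow, Real.sq_sqrt n.cast_nonneg]
    exact le_of_mul_le_mul_left hsq (by exact_mod_cast hn)
  exact (pow_le_pow_iff_left₀ (by positivity) hB two_ne_zero).1 hsq'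

end Energy

def cubeEmbedding (n : ℕ) (x : Fin n → Bool) : EuclideanSpace ℝ (Fin n) :=
  WithLp.toLp 2 fun i => if x i then 1 else 0

lemma norm_cubeEmbedding_sub {n : ℕ} (x y : Fin n → Bool) :
    ‖cubeEmbedding n x - cubeEmbedding n y‖ = √(hammingDist x y) := by
  rw [← dist_eq_norm, EuclideanSpace.dist_eq, hammingDist, card_filter]
  push_cast
  congr 1
  refine sum_congr rfl fun i _ => ?_
  simp only [cubeEmbedding]
  cases x i <;> cases y i <;> simp

lemma inv_sqrt_mul_le_sqrt {d n : ℝ} (hd : 0 ≤ d) (hdn : d ≤ n) : (√n)⁻¹ * d ≤ √d := by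
  rcases hd.eq_or_lt with rfl | hd
  · simp
  rw [inv_mul_le_iff₀ (Real.sqrt_pos.2 (hd.trans_le hdn))]
  calc d = √d * √d := (Real.mul_self_sqrt hd.le).symm
    _ ≤ √n * √d := by gcongr

lemma cubeEmbedding_hammingDist_bounds {n : ℕ} (x y : Fin n → Bool) :
    (√n)⁻¹ * hammingDist x y ≤ ‖cubeEmbedding n x - cubeEmbedding n y‖ ∧
      ‖cubeEmbedding n x - cubeEmbedding n y‖ ≤ 1 * hammingDist x y := by
  rw [norm_cubeEmbedding_sub, one_mul]
  have hle : hammingDist x y ≤ n := hammingDist_le_card_fintype.trans_eq (Fintype.card_fin n)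
  refine ⟨inv_sqrt_mul_le_sqrt (Nat.cast_nonneg _) (by exact_mod_cast hle), ?_⟩
  rcases (hammingDist x y).eq_zero_or_pos with h | h
  · simp [h]
  · exact Real.sqrt_le_self_iff.2 (Or.inr (by exact_mod_cast h))

/-- Enflo's theorem: For `n ≥ 1`, the Hamming cube `H_n = {0,1}^n` with
the Hamming metric `d₁` has Euclidean distortion exactly `√n`:
(i) every injective bi-Lipschitz map `f : H_n → H` into a real Hilbert space, with
constants `A, B > 0` satisfying `A·d₁(x,y) ≤ ‖f x - f y‖ ≤ B·d₁(x,y)`, has `B/A ≥ √n`;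
(ii) there is a map `f : H_n → ℝⁿ` (Euclidean norm) and constants `A, B > 0` with
`B/A = √n` satisfying the same two-sided inequality. The cube is modelled as
`Fin n → Bool`, and `d₁(x,y)` is the number of differing coordinates. -/
theorem enflo_hamming_cube_distortion (n : ℕ) (hn : 1 ≤ n) :
    (∀ (H : Type) [NormedAddCommGroup H] [InnerProductSpace ℝ H] [CompleteSpace H],
      ∀ f : (Fin n → Bool) → H, Function.Injective f →
      ∀ A B : ℝ, 0 < A → 0 < B →
      (∀ x y : Fin n → Bool,
        A * ((Finset.univ.filter fun i => x i ≠ y i).card : ℝ) ≤ ‖f x - f y‖ ∧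
        ‖f x - f y‖ ≤ B * ((Finset.univ.filter fun i => x i ≠ y i).card : ℝ)) →
      Real.sqrt n ≤ B / A) ∧
    (∃ (f : (Fin n → Bool) → EuclideanSpace ℝ (Fin n)) (A B : ℝ),
      0 < A ∧ 0 < B ∧ B / A = Real.sqrt n ∧
      ∀ x y : Fin n → Bool,
        A * ((Finset.univ.filter fun i => x i ≠ y i).card : ℝ) ≤ ‖f x - f y‖ ∧
        ‖f x - f y‖ ≤ B * ((Finset.univ.filter fun i => x i ≠ y i).card : ℝ)) := by
  refine ⟨fun H _ _ _ f _ A B hA hB hf => ?_, ?_⟩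
  · rw [le_div_iff₀ hA, mul_comm]
    exact mul_sqrt_le_of_hammingDist_bounds hA.le hB.le (fun x y => (hf x y).1)
      (fun x y => (hf x y).2)
  · have hsqrt : 0 < √(n : ℝ) := Real.sqrt_pos.2 (by exact_mod_cast hn)
    exact ⟨cubeEmbedding n, (√n)⁻¹, 1, inv_pos.2 hsqrt, one_pos, by rw [div_inv_eq_mul, one_mul],
      cubeEmbedding_hammingDist_bounds⟩
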